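/- arXiv:2104.03942 — 2 statements merged into one kernel-verified Lean document; each statement's English description precedes it below -/
import Mathlib

section
/- Let σ > 0, μ ∈ ℝ and 0 < a ≤ b. Set α = log a − μ and β = log b − μ. Then ∫_a^b Φ((log u − μ)/σ) du = e^μ [ e^β Φ(β/σ) − e^α Φ(α/σ) + e^{σ²/2} ( Φ((α − σ²)/σ) − Φ((β − σ²)/σ) ) ]. -/
open MeasureTheory

/-- The standard normal cumulative distribution function. -/
noncomputable def Phi (x : ℝ) : ℝ :=
  ∫ t in Set.Iic x, Real.exp (-t^2/2) / Real.sqrt (2 * Real.pi)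

noncomputable def phi (t : ℝ) : ℝ := Real.exp (-t^2/2) / Real.sqrt (2 * Real.pi)

lemma phi_cont : Continuous phi := by
  unfold phi; fun_prop

lemma phi_integrable : Integrable phi := by
  have : Integrable (fun t : ℝ => Real.exp (-(1/2 : ℝ) * t^2)) := integrable_exp_neg_mul_sq (by norm_num)
  have h2 : phi = fun t => (Real.sqrt (2 * Real.pi))⁻¹ * Real.exp (-(1/2 : ℝ) * t^2) := by
    funext t; unfold phi; ring_nf
  rw [h2]; exact this.const_mul _

lemma Phi_sub (a b : ℝ) : Phi b - Phi a = ∫ t in a..b, phi t := by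
  unfold Phi
  exact intervalIntegral.integral_Iic_sub_Iic phi_integrable.integrableOn phi_integrable.integrableOn

lemma Phi_hasDerivAt (x : ℝ) : HasDerivAt Phi (phi x) x := by
  have h : Phi = fun y => Phi 0 + ∫ t in (0:ℝ)..y, phi t := by
    funext y; rw [← Phi_sub]; ring
  rw [h]
  exact (intervalIntegral.integral_hasDerivAt_right
    (phi_integrable.intervalIntegrable) (phi_cont.stronglyMeasurableAtFilter _ _)
    phi_cont.continuousAt).const_add _

/-- Lemma: for `σ > 0`, `0 < a ≤ b`, with `α = log a − μ` and `β = log b − μ`,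
`∫_a^b Φ((log u − μ)/σ) du = e^μ [e^β Φ(β/σ) − e^α Φ(α/σ)
  + e^{σ²/2}(Φ((α−σ²)/σ) − Φ((β−σ²)/σ))]`. -/
theorem integral_Phi_log (σ μ a b : ℝ) (hσ : 0 < σ) (ha : 0 < a) (hab : a ≤ b) :
    (∫ u in a..b, Phi ((Real.log u - μ) / σ))
      = Real.exp μ *
        (Real.exp (Real.log b - μ) * Phi ((Real.log b - μ) / σ)
          - Real.exp (Real.log a - μ) * Phi ((Real.log a - μ) / σ)
          + Real.exp (σ^2/2) *
            (Phi ((Real.log a - μ - σ^2) / σ) - Phi ((Real.log b - μ - σ^2) / σ))) := by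
  have hb : 0 < b := lt_of_lt_of_le ha hab
  have hsub : Set.uIcc a b ⊆ Set.Ioi (0:ℝ) := by
    rw [Set.uIcc_of_le hab]
    intro x hx
    exact lt_of_lt_of_le ha hx.1
  -- derivative of the composed function
  set G : ℝ → ℝ := fun x => Phi ((Real.log x - μ) / σ) with hG
  have hderiv : ∀ x ∈ Set.uIcc a b, HasDerivAt G (phi ((Real.log x - μ) / σ) * (1 / (x * σ))) x := by
    intro x hx
    have hx0 : 0 < x := hsub hx
    have h1 : HasDerivAt (fun x : ℝ => (Real.log x - μ) / σ) (1 / (x * σ)) x := by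
      have := ((Real.hasDerivAt_log hx0.ne').sub_const μ).div_const σ
      exact this.congr_deriv (by ring)
    exact (Phi_hasDerivAt _).comp x h1
  have hid : ∀ x ∈ Set.uIcc a b, HasDerivAt (fun x : ℝ => x) 1 x := fun x _ => hasDerivAt_id x
  have hcont_inner : ContinuousOn (fun x : ℝ => phi ((Real.log x - μ) / σ) * (1 / (x * σ))) (Set.uIcc a b) := by
    apply ContinuousOn.mul
    · exact phi_cont.comp_continuousOn
        (((Real.continuousOn_log.mono (by intro x hx; exact (hsub hx).ne')).sub continuousOn_const).div_const σ)
    · apply ContinuousOn.div continuousOn_const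
      · exact (continuousOn_id.mul continuousOn_const)
      · intro x hx
        exact mul_ne_zero (hsub hx).ne' hσ.ne'
  have hu' : IntervalIntegrable (fun x : ℝ => phi ((Real.log x - μ) / σ) * (1 / (x * σ))) volume a b := by
    apply ContinuousOn.intervalIntegrable hcont_inner
  have hparts : ∫ x in a..b, G x * 1
      = G b * b - G a * a - ∫ x in a..b, phi ((Real.log x - μ) / σ) * (1 / (x * σ)) * x :=
    intervalIntegral.integral_mul_deriv_eq_deriv_mul hderiv hid hu'
      (intervalIntegrable_const)
  -- simplify both integrands
  have hL : (∫ x in a..b, G x * 1) = ∫ x in a..b, G x := by simp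
  have hR : (∫ x in a..b, phi ((Real.log x - μ) / σ) * (1 / (x * σ)) * x)
      = ∫ x in a..b, phi ((Real.log x - μ) / σ) / σ := by
    apply intervalIntegral.integral_congr
    intro x hx
    have hx0 : (0:ℝ) < x := hsub hx
    field_simp
  -- substitution for the remaining integral
  have hsubst : (∫ x in a..b, phi ((Real.log x - μ) / σ) / σ)
      = Real.exp (μ + σ^2/2) *
          (Phi ((Real.log b - μ) / σ - σ) - Phi ((Real.log a - μ) / σ - σ)) := by
    have hf : ∀ t ∈ Set.uIcc ((Real.log a - μ)/σ) ((Real.log b - μ)/σ),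
        HasDerivAt (fun t : ℝ => Real.exp (μ + σ * t)) (σ * Real.exp (μ + σ * t)) t := by
      intro t _
      have := (Real.hasDerivAt_exp (μ + σ * t)).comp t
        (((hasDerivAt_id t).const_mul σ).const_add μ)
      exact this.congr_deriv (by ring)
    have hg : ContinuousOn (fun x : ℝ => phi ((Real.log x - μ) / σ) / σ)
        ((fun t : ℝ => Real.exp (μ + σ * t)) '' Set.uIcc ((Real.log a - μ)/σ) ((Real.log b - μ)/σ)) := by
      apply ContinuousOn.div_const
      apply phi_cont.comp_continuousOn
      apply ContinuousOn.div_const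
      apply ContinuousOn.sub _ continuousOn_const
      apply Real.continuousOn_log.mono
      rintro x ⟨t, _, rfl⟩
      exact (Real.exp_pos _).ne'
    have key := intervalIntegral.integral_comp_smul_deriv''
      (f := fun t : ℝ => Real.exp (μ + σ * t)) (f' := fun t => σ * Real.exp (μ + σ * t))
      (g := fun x : ℝ => phi ((Real.log x - μ) / σ) / σ)
      (a := (Real.log a - μ)/σ) (b := (Real.log b - μ)/σ)
      (Continuous.continuousOn (by fun_prop))
      (fun t ht => ((hf t (by simpa [Set.uIcc] using Set.Ioo_subset_Icc_self ht)).hasDerivWithinAt))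
      (Continuous.continuousOn (by fun_prop)) hg
    have hpoint : ∀ t : ℝ, Real.exp (μ + σ * t) * phi t = Real.exp (μ + σ^2/2) * phi (t - σ) := by
      intro t
      unfold phi
      rw [← mul_div_assoc, ← mul_div_assoc, ← Real.exp_add, ← Real.exp_add]
      congr 2
      ring
    have hfa : Real.exp (μ + σ * ((Real.log a - μ)/σ)) = a := by
      rw [show μ + σ * ((Real.log a - μ)/σ) = Real.log a by field_simp; ring]
      exact Real.exp_log ha
    have hfb : Real.exp (μ + σ * ((Real.log b - μ)/σ)) = b := by
      rw [show μ + σ * ((Real.log b - μ)/σ) = Real.log b by field_simp; ring]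
      exact Real.exp_log hb
    simp only [Function.comp_apply] at key
    rw [hfa, hfb] at key
    rw [← key]
    have hInt : (∫ t in ((Real.log a - μ)/σ)..((Real.log b - μ)/σ),
          (σ * Real.exp (μ + σ * t)) • ((fun x => phi ((Real.log x - μ) / σ) / σ) ∘
            (fun t : ℝ => Real.exp (μ + σ * t))) t)
        = ∫ t in ((Real.log a - μ)/σ)..((Real.log b - μ)/σ), Real.exp (μ + σ^2/2) * phi (t - σ) := by
      apply intervalIntegral.integral_congr
      intro t _
      simp only [Function.comp_apply, smul_eq_mul, Real.log_exp]
      rw [show (μ + σ*t - μ)/σ = t by field_simp; ring]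
      rw [← hpoint t]
      field_simp
    simp only [Function.comp_apply] at hInt
    rw [hInt, intervalIntegral.integral_const_mul,
      intervalIntegral.integral_comp_sub_right (fun s => phi s) σ, ← Phi_sub]
  -- final assembly
  rw [← hL, hparts, hR, hsubst]
  have e1 : (Real.log a - μ - σ^2)/σ = (Real.log a - μ)/σ - σ := by
    field_simp
  have e2 : (Real.log b - μ - σ^2)/σ = (Real.log b - μ)/σ - σ := by
    field_simp
  rw [e1, e2]
  simp only [hG]
  have hbexp : Real.exp μ * Real.exp (Real.log b - μ) = b := by
    rw [← Real.exp_add]; simp [Real.exp_log hb]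
  have haexp : Real.exp μ * Real.exp (Real.log a - μ) = a := by
    rw [← Real.exp_add]; simp [Real.exp_log ha]
  have hE : Real.exp μ * Real.exp (σ^2/2) = Real.exp (μ + σ^2/2) := by
    rw [← Real.exp_add]
  linear_combination (-(Phi ((Real.log b - μ)/σ))) * hbexp
    + (Phi ((Real.log a - μ)/σ)) * haexp
    + (Phi ((Real.log b - μ)/σ - σ) - Phi ((Real.log a - μ)/σ - σ)) * hE
end

section
/- Let ũ, μ ∈ ℝ and 0 < ξ < σ, and set σ' = √(σ² − ξ²), h = (ũ − μ)/σ and k = (ũ − μ)/ξ. Then ∫_{−∞}^{k} Φ( (ũ − μ − ξx)/σ' ) φ(x) dx = (1/2) Φ(h) + (1/2) Φ(k) − T( h , σ'/ξ ). -/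
open MeasureTheory

/-- The standard normal density. -/
noncomputable def phiPdf (x : ℝ) : ℝ :=
  Real.exp (-x^2/2) / Real.sqrt (2 * Real.pi)

/-- Owen's T function. -/
noncomputable def owenT (h a : ℝ) : ℝ :=
  (1 / (2 * Real.pi)) * ∫ x in (0:ℝ)..a, Real.exp (-h^2 * (1 + x^2) / 2) / (1 + x^2)

open Real Set Filter Topology

lemma sqrt2pi_pos : 0 < Real.sqrt (2 * π) :=
  Real.sqrt_pos.2 (by positivity)

lemma phiPdf_nonneg (x : ℝ) : 0 ≤ phiPdf x := by
  unfold phiPdf; positivity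

lemma phiPdf_le (x : ℝ) : phiPdf x ≤ (Real.sqrt (2 * π))⁻¹ := by
  unfold phiPdf
  rw [div_eq_mul_inv]
  have h1 : Real.exp (-x^2/2) ≤ 1 := Real.exp_le_one_iff.2 (by nlinarith [sq_nonneg x])
  nlinarith [inv_pos.2 sqrt2pi_pos, Real.exp_pos (-x^2/2)]

@[fun_prop] lemma continuous_phiPdf : Continuous phiPdf := by
  unfold phiPdf
  fun_prop

lemma integrable_phiPdf : Integrable phiPdf := by
  have h : Integrable (fun x : ℝ => Real.exp (-(1/2) * x ^ 2)) := integrable_exp_neg_mul_sq (by norm_num)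
  have : phiPdf = fun x => Real.exp (-(1/2) * x ^ 2) * (Real.sqrt (2 * π))⁻¹ := by
    funext x; unfold phiPdf; rw [div_eq_mul_inv]; ring_nf
  rw [this]
  exact h.mul_const _

lemma integral_phiPdf : ∫ x, phiPdf x = 1 := by
  have h : ∫ x : ℝ, Real.exp (-(1/2) * x ^ 2) = Real.sqrt (π / (1/2)) := integral_gaussian (1/2)
  have e : phiPdf = fun x => Real.exp (-(1/2) * x ^ 2) * (Real.sqrt (2 * π))⁻¹ := by
    funext x; unfold phiPdf; rw [div_eq_mul_inv]; ring_nf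
  rw [e, integral_mul_const, h]
  rw [show π / (1/2) = 2 * π by ring]
  exact mul_inv_cancel₀ sqrt2pi_pos.ne'

lemma Phi_eq (x : ℝ) : Phi x = ∫ t in Iic x, phiPdf t := rfl

lemma Phi_sub_Phi (a b : ℝ) : Phi b - Phi a = ∫ t in a..b, phiPdf t := by
  rw [Phi_eq, Phi_eq]
  exact intervalIntegral.integral_Iic_sub_Iic integrable_phiPdf.integrableOn integrable_phiPdf.integrableOn

lemma hasDerivAt_Phi (x : ℝ) : HasDerivAt Phi (phiPdf x) x := by
  have key : HasDerivAt (fun u => ∫ t in (0:ℝ)..u, phiPdf t) (phiPdf x) x := by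
    exact intervalIntegral.integral_hasDerivAt_right
      integrable_phiPdf.intervalIntegrable
      continuous_phiPdf.stronglyMeasurable.stronglyMeasurableAtFilter
      continuous_phiPdf.continuousAt
  have : Phi = fun u => Phi 0 + ∫ t in (0:ℝ)..u, phiPdf t := by
    funext u; rw [← Phi_sub_Phi]; ring
  rw [this]
  simpa using (key.const_add (Phi 0))

@[fun_prop] lemma continuous_Phi : Continuous Phi :=
  continuous_iff_continuousAt.2 fun x => (hasDerivAt_Phi x).continuousAt

lemma Phi_tendsto_atTop : Tendsto Phi atTop (𝓝 1) := by
  have := (MeasureTheory.aecover_Iic (l := atTop) (μ := (volume : Measure ℝ)) tendsto_id).integral_tendsto_of_countably_generated integrable_phiPdf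
  rw [integral_phiPdf] at this
  exact this

lemma integral_Ioi_phiPdf (q : ℝ) : ∫ t in Ioi q, phiPdf t = Phi (-q) := by
  have h := integral_comp_neg_Iic (-q) phiPdf
  have h2 : ∫ x in Iic (-q), phiPdf (-x) = Phi (-q) := by
    rw [Phi_eq]
    apply setIntegral_congr_fun measurableSet_Iic
    intro t _
    unfold phiPdf; ring_nf
  rw [h2] at h
  rw [neg_neg] at h
  exact h.symm

lemma Phi_neg (x : ℝ) : Phi (-x) = 1 - Phi x := by
  have h : Phi x + ∫ t in Ioi x, phiPdf t = 1 := by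
    rw [Phi_eq, intervalIntegral.integral_Iic_add_Ioi integrable_phiPdf.integrableOn integrable_phiPdf.integrableOn, integral_phiPdf]
  rw [integral_Ioi_phiPdf] at h
  linarith

lemma Phi_zero : Phi 0 = 1/2 := by
  have := Phi_neg 0
  rw [neg_zero] at this; linarith

lemma Phi_nonneg (x : ℝ) : 0 ≤ Phi x := by
  rw [Phi_eq]
  exact setIntegral_nonneg measurableSet_Iic fun t _ => phiPdf_nonneg t

lemma Phi_le_one (x : ℝ) : Phi x ≤ 1 := by
  have h : Phi x + ∫ t in Ioi x, phiPdf t = 1 := by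
    rw [Phi_eq, intervalIntegral.integral_Iic_add_Ioi integrable_phiPdf.integrableOn integrable_phiPdf.integrableOn, integral_phiPdf]
  have h2 : 0 ≤ ∫ t in Ioi x, phiPdf t :=
    setIntegral_nonneg measurableSet_Ioi fun t _ => phiPdf_nonneg t
  linarith

lemma Phi_tendsto_atBot : Tendsto Phi atBot (𝓝 0) := by
  have h : Tendsto (fun x => Phi (-x)) atTop (𝓝 0) := by
    simp only [Phi_neg]
    simpa using ((tendsto_const_nhds (x := (1:ℝ)) (f := atTop)).sub Phi_tendsto_atTop)
  have h2 := h.comp tendsto_neg_atBot_atTop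
  exact h2.congr (fun x => by simp)

lemma gauss_interval (h c : ℝ) :
    ∫ x in (0:ℝ)..c, h * Real.exp (-(h*x)^2/2) = Real.sqrt (2*π) * (Phi (h*c) - Phi 0) := by
  rcases eq_or_ne h 0 with rfl | hh
  · simp
  · have key : ∫ x in (0:ℝ)..c, Real.exp (-(h*x)^2/2) =
        h⁻¹ • ∫ u in (h*0)..(h*c), Real.exp (-u^2/2) := by
      exact intervalIntegral.integral_comp_mul_left (fun u => Real.exp (-u^2/2)) hh
    have e2 : ∫ u in (h*0)..(h*c), Real.exp (-u^2/2) = Real.sqrt (2*π) * (Phi (h*c) - Phi 0) := by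
      rw [mul_zero, Phi_sub_Phi]
      rw [← intervalIntegral.integral_const_mul]
      apply intervalIntegral.integral_congr
      intro u _
      unfold phiPdf
      field_simp
    rw [intervalIntegral.integral_const_mul, key, e2, smul_eq_mul]
    field_simp

lemma hasDerivAt_owenT (a h : ℝ) :
    HasDerivAt (fun y => owenT y a) (-(phiPdf h * (Phi (h * a) - 1/2))) h := by
  have hcont : ∀ y : ℝ, Continuous fun x : ℝ => Real.exp (-y^2 * (1 + x^2) / 2) / (1 + x^2) := by
    intro y
    apply Continuous.div (by fun_prop) (by fun_prop)
    intro x; positivity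
  have hder : ∀ (t y : ℝ), HasDerivAt (fun y => Real.exp (-y^2 * (1 + t^2) / 2) / (1 + t^2))
      (-y * Real.exp (-y^2 * (1 + t^2) / 2)) y := by
    intro t y
    have h1 : HasDerivAt (fun y : ℝ => -y^2 * (1 + t^2) / 2) (-y * (1 + t^2)) y := by
      have := ((hasDerivAt_pow 2 y).const_mul (-(1 + t^2)/2))
      have e1 : (fun y : ℝ => -y^2 * (1 + t^2) / 2) = fun y => -(1 + t^2)/2 * y^2 := by
        funext z; ring
      rw [e1]
      refine this.congr_deriv ?_
      push_cast; ring
    have h2 := (h1.exp).div_const (1 + t^2)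
    have ht : (1 : ℝ) + t^2 ≠ 0 := by positivity
    refine h2.congr_deriv ?_
    rw [mul_div_assoc, mul_div_cancel_right₀ _ ht]
    ring
  have main := intervalIntegral.hasDerivAt_integral_of_dominated_loc_of_deriv_le
    (F := fun y x => Real.exp (-y^2 * (1 + x^2) / 2) / (1 + x^2))
    (F' := fun y x => -y * Real.exp (-y^2 * (1 + x^2) / 2))
    (x₀ := h) (a := 0) (b := a) (bound := fun _ => |h| + 1) (μ := volume)
    (Metric.ball_mem_nhds h one_pos)
    (Eventually.of_forall fun y => ((hcont y).aestronglyMeasurable).restrict)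
    ((hcont h).intervalIntegrable 0 a)
    ((Continuous.aestronglyMeasurable (by fun_prop)).restrict)
    (Eventually.of_forall fun t _ y hy => by
      have h1 : Real.exp (-y^2 * (1 + t^2) / 2) ≤ 1 :=
        Real.exp_le_one_iff.2 (by nlinarith [sq_nonneg y, sq_nonneg t])
      have h2 : |y| ≤ |h| + 1 := by
        have := mem_ball_iff_norm.1 hy
        calc |y| = |h + (y - h)| := by ring_nf
        _ ≤ |h| + |y - h| := abs_add_le _ _
        _ ≤ |h| + 1 := by
            have : |y - h| ≤ 1 := by
              rw [Real.norm_eq_abs] at this; linarith [this]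
            linarith
      calc ‖-y * Real.exp (-y^2 * (1 + t^2) / 2)‖
          = |y| * Real.exp (-y^2 * (1 + t^2) / 2) := by
            rw [norm_mul, norm_neg, Real.norm_eq_abs, Real.norm_eq_abs,
              abs_of_pos (Real.exp_pos _)]
        _ ≤ (|h| + 1) * 1 := by
            apply mul_le_mul h2 h1 (Real.exp_pos _).le (by positivity)
        _ = |h| + 1 := mul_one _)
    (intervalIntegrable_const)
    (Eventually.of_forall fun t _ y _ => hder t y)
  obtain ⟨-, hD⟩ := main
  have : HasDerivAt (fun y => owenT y a)
      ((1 / (2 * π)) * ∫ x in (0:ℝ)..a, -h * Real.exp (-h^2 * (1 + x^2) / 2)) h := by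
    unfold owenT
    exact hD.const_mul _
  convert this using 1
  have split : ∀ x : ℝ, Real.exp (-h^2 * (1 + x^2) / 2)
      = Real.exp (-h^2/2) * Real.exp (-(h*x)^2/2) := by
    intro x
    rw [← Real.exp_add]
    ring_nf
  have e : ∫ x in (0:ℝ)..a, -h * Real.exp (-h^2 * (1 + x^2) / 2)
      = -(Real.exp (-h^2/2) * (Real.sqrt (2*π) * (Phi (h*a) - Phi 0))) := by
    rw [← gauss_interval h a, ← intervalIntegral.integral_const_mul,
      ← intervalIntegral.integral_neg]
    apply intervalIntegral.integral_congr
    intro x _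
    dsimp only
    rw [split x]
    ring
  rw [e, Phi_zero]
  unfold phiPdf
  set s := Real.sqrt (2*π) with hs
  have h2π : s * s = 2*π := Real.mul_self_sqrt (by positivity)
  rw [← h2π]
  have hsne : s ≠ 0 := ne_of_gt sqrt2pi_pos
  field_simp

-- shift lemma
lemma integral_Ioi_shift (f : ℝ → ℝ) (r : ℝ) :
    ∫ v in Ioi (0:ℝ), f (v - r) = ∫ v in Ioi (-r), f v := by
  have hmp : MeasurePreserving (fun v : ℝ => v + -r) volume volume :=
    measurePreserving_add_right volume (-r)
  have hemb : MeasurableEmbedding (fun v : ℝ => v + -r) :=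
    (Homeomorph.addRight (-r)).measurableEmbedding
  have := hmp.setIntegral_preimage_emb hemb f (Ioi (-r))
  have hpre : (fun v : ℝ => v + -r) ⁻¹' (Ioi (-r)) = Ioi (0:ℝ) := by
    ext v; simp
  rw [hpre] at this
  simpa [sub_eq_add_neg] using this

lemma phiPdf_mul_phiPdf (σ ξ c s : ℝ) (hξ : 0 < ξ) (hξσ : ξ < σ) :
    phiPdf s * phiPdf ((c - Real.sqrt (σ^2 - ξ^2) * s)/ξ)
      = phiPdf (c/σ) * phiPdf ((σ*s - Real.sqrt (σ^2 - ξ^2) * c/σ)/ξ) := by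
  have hσ : 0 < σ := hξ.trans hξσ
  set p := Real.sqrt (σ^2 - ξ^2) with hp
  have hp2 : p^2 = σ^2 - ξ^2 := Real.sq_sqrt (by nlinarith)
  have hexp : -s^2/2 + -((c - p*s)/ξ)^2/2 = -(c/σ)^2/2 + -((σ*s - p*c/σ)/ξ)^2/2 := by
    have hξ0 : ξ ≠ 0 := hξ.ne'
    have hσ0 : σ ≠ 0 := hσ.ne'
    linear_combination (norm := skip) ((c^2/σ^2 - s^2)/(2*ξ^2)) * hp2
    field_simp
    ring
  unfold phiPdf
  rw [div_mul_div_comm, div_mul_div_comm, ← Real.exp_add, ← Real.exp_add, hexp]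

lemma value_integral (σ ξ c : ℝ) (hξ : 0 < ξ) (hξσ : ξ < σ) :
    ∫ s in Ioi (0:ℝ), phiPdf s * (phiPdf ((c - Real.sqrt (σ^2-ξ^2) * s)/ξ) * ξ⁻¹)
      = phiPdf (c/σ) * Phi (Real.sqrt (σ^2-ξ^2) * c / (σ*ξ)) / σ := by
  have hσ : 0 < σ := hξ.trans hξσ
  set p := Real.sqrt (σ^2 - ξ^2) with hp
  have hppos : 0 < p := Real.sqrt_pos.2 (by nlinarith)
  have step1 : ∫ s in Ioi (0:ℝ), phiPdf s * (phiPdf ((c - p * s)/ξ) * ξ⁻¹)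
      = ∫ s in Ioi (0:ℝ), (phiPdf (c/σ) * ξ⁻¹) * phiPdf ((σ/ξ) * s - p*c/(σ*ξ)) := by
    apply setIntegral_congr_fun measurableSet_Ioi
    intro s _
    dsimp only
    have this1 := phiPdf_mul_phiPdf σ ξ c s hξ hξσ
    rw [← hp] at this1
    have harg : (σ*s - p * c/σ)/ξ = (σ/ξ) * s - p*c/(σ*ξ) := by
      field_simp
    rw [harg] at this1
    linear_combination ξ⁻¹ * this1
  rw [step1, integral_const_mul]
  have step2 : ∫ s in Ioi (0:ℝ), phiPdf ((σ/ξ) * s - p*c/(σ*ξ))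
      = (σ/ξ)⁻¹ * ∫ v in Ioi (0:ℝ), phiPdf (v - p*c/(σ*ξ)) := by
    have := integral_comp_mul_left_Ioi (fun v => phiPdf (v - p*c/(σ*ξ))) 0 (b := σ/ξ) (by positivity)
    simp only [mul_zero, smul_eq_mul] at this
    exact this
  rw [step2, integral_Ioi_shift, integral_Ioi_phiPdf, neg_neg]
  field_simp

lemma hasDerivAt_B (σ ξ : ℝ) (hξ : 0 < ξ) (hξσ : ξ < σ) (c : ℝ) :
    HasDerivAt (fun y => ∫ s in Ioi (0:ℝ), phiPdf s * Phi ((y - Real.sqrt (σ^2-ξ^2) * s)/ξ))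
      (phiPdf (c/σ) * Phi (Real.sqrt (σ^2-ξ^2) * c / (σ*ξ)) / σ) c := by
  have hσ : 0 < σ := hξ.trans hξσ
  set p := Real.sqrt (σ^2 - ξ^2) with hp
  have hFc : ∀ y : ℝ, Continuous fun s : ℝ => phiPdf s * Phi ((y - p*s)/ξ) := by
    intro y; fun_prop
  have hint : ∀ y : ℝ, Integrable (fun s => phiPdf s * Phi ((y - p*s)/ξ))
      (volume.restrict (Ioi (0:ℝ))) := by
    intro y
    apply Integrable.mono (integrable_phiPdf.restrict) ((hFc y).aestronglyMeasurable.restrict)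
    apply Eventually.of_forall
    intro s
    rw [Real.norm_eq_abs, Real.norm_eq_abs, abs_of_nonneg (phiPdf_nonneg s),
      abs_of_nonneg (mul_nonneg (phiPdf_nonneg s) (Phi_nonneg _))]
    nlinarith [phiPdf_nonneg s, Phi_nonneg ((y - p*s)/ξ), Phi_le_one ((y - p*s)/ξ)]
  have main := hasDerivAt_integral_of_dominated_loc_of_deriv_le
    (F := fun y s => phiPdf s * Phi ((y - p*s)/ξ))
    (F' := fun y s => phiPdf s * (phiPdf ((y - p*s)/ξ) * ξ⁻¹))
    (x₀ := c) (μ := volume.restrict (Ioi (0:ℝ)))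
    (bound := fun s => phiPdf s * ((Real.sqrt (2*π))⁻¹ * ξ⁻¹))
    (Metric.ball_mem_nhds c one_pos)
    (Eventually.of_forall fun y => ((hFc y).aestronglyMeasurable).restrict)
    (hint c)
    ((Continuous.aestronglyMeasurable (by fun_prop)).restrict)
    (Eventually.of_forall fun s y _ => by
      rw [Real.norm_eq_abs, abs_of_nonneg (mul_nonneg (phiPdf_nonneg s)
        (mul_nonneg (phiPdf_nonneg _) (by positivity)))]
      have h1 := phiPdf_le ((y - p*s)/ξ)
      have h2 := phiPdf_nonneg ((y - p*s)/ξ)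
      have h3 := phiPdf_nonneg s
      have h4 : (0:ℝ) < ξ⁻¹ := by positivity
      exact mul_le_mul_of_nonneg_left (mul_le_mul_of_nonneg_right h1 h4.le) h3)
    ((integrable_phiPdf.mul_const _).restrict)
    (Eventually.of_forall fun s y _ => by
      have hinner : HasDerivAt (fun y : ℝ => (y - p*s)/ξ) ξ⁻¹ y := by
        have := ((hasDerivAt_id y).sub_const (p*s)).div_const ξ
        simpa [one_div] using this
      have := ((hasDerivAt_Phi ((y - p*s)/ξ)).comp y hinner).const_mul (phiPdf s)
      simpa using this)
  exact value_integral σ ξ c hξ hξσ ▸ main.2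

lemma owenT_abs_le (h a : ℝ) (ha : 0 ≤ a) :
    |owenT h a| ≤ (1/(2*π)) * (Real.exp (-h^2/2) * a) := by
  unfold owenT
  rw [abs_mul, abs_of_nonneg (by positivity : (0:ℝ) ≤ 1/(2*π))]
  apply mul_le_mul_of_nonneg_left _ (by positivity)
  have key : ‖∫ x in (0:ℝ)..a, Real.exp (-h^2 * (1 + x^2) / 2) / (1 + x^2)‖
      ≤ Real.exp (-h^2/2) * |a - 0| := by
    apply intervalIntegral.norm_integral_le_of_norm_le_const
    intro x _
    rw [Real.norm_eq_abs, abs_of_nonneg (by positivity)]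
    have h1 : (1:ℝ) ≤ 1 + x^2 := by nlinarith [sq_nonneg x]
    have h2 : Real.exp (-h^2 * (1 + x^2) / 2) ≤ Real.exp (-h^2/2) := by
      apply Real.exp_le_exp.2
      nlinarith [sq_nonneg x, sq_nonneg h, sq_nonneg (h*x)]
    calc Real.exp (-h^2 * (1 + x^2) / 2) / (1 + x^2)
        ≤ Real.exp (-h^2 * (1 + x^2) / 2) / 1 := by
          apply div_le_div_of_nonneg_left (Real.exp_pos _).le (by norm_num) h1
      _ ≤ Real.exp (-h^2/2) := by rw [div_one]; exact h2
  rw [Real.norm_eq_abs] at key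
  calc |∫ x in (0:ℝ)..a, Real.exp (-h^2 * (1 + x^2) / 2) / (1 + x^2)|
      ≤ Real.exp (-h^2/2) * |a - 0| := key
    _ = Real.exp (-h^2/2) * a := by rw [sub_zero, abs_of_nonneg ha]

lemma B_eq (σ ξ : ℝ) (hξ : 0 < ξ) (hξσ : ξ < σ) (c : ℝ) :
    ∫ s in Ioi (0:ℝ), phiPdf s * Phi ((c - Real.sqrt (σ^2-ξ^2) * s)/ξ)
      = (1/2) * Phi (c/σ) - owenT (c/σ) (Real.sqrt (σ^2-ξ^2)/ξ) := by
  have hσ : 0 < σ := hξ.trans hξσ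
  set p := Real.sqrt (σ^2 - ξ^2) with hp
  have hppos : 0 < p := Real.sqrt_pos.2 (by nlinarith)
  set G : ℝ → ℝ := fun y =>
    (∫ s in Ioi (0:ℝ), phiPdf s * Phi ((y - p * s)/ξ))
      - ((1/2) * Phi (y/σ) - owenT (y/σ) (p/ξ)) with hG
  have hdiv : ∀ y : ℝ, HasDerivAt (fun z : ℝ => z/σ) σ⁻¹ y := by
    intro y
    simpa [one_div] using (hasDerivAt_id y).div_const σ
  have hGderiv : ∀ y : ℝ, HasDerivAt G 0 y := by
    intro y
    have h1 := hasDerivAt_B σ ξ hξ hξσ y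
    rw [← hp] at h1
    have h2 : HasDerivAt (fun z : ℝ => (1/2) * Phi (z/σ)) ((1/2) * (phiPdf (y/σ) * σ⁻¹)) y :=
      (((hasDerivAt_Phi (y/σ)).comp y (hdiv y))).const_mul (1/2)
    have h3 : HasDerivAt (fun z : ℝ => owenT (z/σ) (p/ξ))
        (-(phiPdf (y/σ) * (Phi ((y/σ) * (p/ξ)) - 1/2)) * σ⁻¹) y :=
      ((hasDerivAt_owenT (p/ξ) (y/σ))).comp (h := fun z : ℝ => z/σ) y (hdiv y)
    have h4 := h1.sub (h2.sub h3)
    have harg : (y/σ) * (p/ξ) = p * y / (σ * ξ) := by field_simp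
    rw [harg] at h4
    refine h4.congr_deriv ?_
    ring
  have hdiff : Differentiable ℝ G := fun y => (hGderiv y).differentiableAt
  have hconst : ∀ y z : ℝ, G y = G z := fun y z =>
    is_const_of_deriv_eq_zero hdiff (fun x => (hGderiv x).deriv) y z
  -- limit of G at -infinity is 0
  have hdivlim : Tendsto (fun y : ℝ => y/σ) atBot atBot :=
    tendsto_id.atBot_div_const hσ
  have hBlim : Tendsto (fun y => ∫ s in Ioi (0:ℝ), phiPdf s * Phi ((y - p * s)/ξ)) atBot (𝓝 0) := by
    have key := tendsto_integral_filter_of_dominated_convergence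
      (μ := volume.restrict (Ioi (0:ℝ))) (l := atBot)
      (F := fun (y : ℝ) (s : ℝ) => phiPdf s * Phi ((y - p*s)/ξ))
      (f := fun _ : ℝ => (0:ℝ)) (bound := phiPdf)
      (Eventually.of_forall fun y =>
        (Continuous.aestronglyMeasurable (by fun_prop)).restrict)
      (Eventually.of_forall fun y => Eventually.of_forall fun s => by
        rw [Real.norm_eq_abs, abs_of_nonneg (mul_nonneg (phiPdf_nonneg s) (Phi_nonneg _))]
        nlinarith [phiPdf_nonneg s, Phi_nonneg ((y - p*s)/ξ), Phi_le_one ((y - p*s)/ξ)])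
      (integrable_phiPdf.restrict)
      (Eventually.of_forall fun s => by
        have harg : Tendsto (fun y : ℝ => (y - p*s)/ξ) atBot atBot := by
          apply Tendsto.atBot_div_const hξ
          simpa [sub_eq_add_neg] using tendsto_atBot_add_const_right atBot (-(p*s)) tendsto_id
        have := (Phi_tendsto_atBot.comp harg).const_mul (phiPdf s)
        simpa using this)
    simpa using key
  have hPhilim : Tendsto (fun y : ℝ => (1/2) * Phi (y/σ)) atBot (𝓝 0) := by
    have := (Phi_tendsto_atBot.comp hdivlim).const_mul (1/2 : ℝ)
    simpa using this
  have hexplim : Tendsto (fun y : ℝ => Real.exp (-(y/σ)^2/2)) atBot (𝓝 0) := by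
    apply Real.tendsto_exp_atBot.comp
    apply Tendsto.atBot_div_const two_pos
    apply tendsto_neg_atTop_atBot.comp
    have h1 : Tendsto (fun y : ℝ => |y/σ|) atBot atTop := tendsto_abs_atBot_atTop.comp hdivlim
    have h2 : Tendsto (fun x : ℝ => x^2) atTop atTop := tendsto_pow_atTop (two_ne_zero)
    have := h2.comp h1
    refine this.congr fun y => ?_
    simp [sq_abs]
  have howenlim : Tendsto (fun y : ℝ => owenT (y/σ) (p/ξ)) atBot (𝓝 0) := by
    have hbd : ∀ y : ℝ, ‖owenT (y/σ) (p/ξ)‖ ≤ (1/(2*π)) * (Real.exp (-(y/σ)^2/2) * (p/ξ)) := by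
      intro y
      rw [Real.norm_eq_abs]
      exact owenT_abs_le (y/σ) (p/ξ) (by positivity)
    have hbt : Tendsto (fun y : ℝ => (1/(2*π)) * (Real.exp (-(y/σ)^2/2) * (p/ξ))) atBot (𝓝 0) := by
      have := (hexplim.mul_const (p/ξ)).const_mul (1/(2*π) : ℝ)
      simpa using this
    exact squeeze_zero_norm hbd hbt
  have hGlim : Tendsto G atBot (𝓝 0) := by
    have h2 := hBlim.sub (hPhilim.sub howenlim)
    rw [hG]
    have h00 : 𝓝 ((0:ℝ) - (0 - 0)) = 𝓝 (0:ℝ) := by norm_num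
    rw [h00] at h2
    exact h2
  have hzero : G c = 0 := by
    have h1 : Tendsto G atBot (𝓝 (G c)) := by
      have : G = fun _ => G c := funext fun y => hconst y c
      rw [this]
      exact tendsto_const_nhds
    exact tendsto_nhds_unique h1 hGlim
  have := hzero
  rw [hG] at this
  linarith [this]

lemma integral_Iic_shift (f : ℝ → ℝ) (k : ℝ) :
    ∫ u in Iic (0:ℝ), f (u + k) = ∫ x in Iic k, f x := by
  have hmp : MeasurePreserving (fun v : ℝ => v + k) volume volume :=
    measurePreserving_add_right volume k
  have hemb : MeasurableEmbedding (fun v : ℝ => v + k) :=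
    (Homeomorph.addRight k).measurableEmbedding
  have := hmp.setIntegral_preimage_emb hemb f (Iic k)
  have hpre : (fun v : ℝ => v + k) ⁻¹' (Iic k) = Iic (0:ℝ) := by
    ext v; simp
  rw [hpre] at this
  exact this

/-- With `σ' = √(σ² − ξ²)`, `h = (ũ − μ)/σ` and `k = (ũ − μ)/ξ`,
`∫_{−∞}^k Φ((ũ − μ − ξx)/σ') φ(x) dx = ½Φ(h) + ½Φ(k) − T(h, σ'/ξ)`. -/
theorem integral_Phi_phi_owenT (utld μ ξ σ : ℝ) (hξ : 0 < ξ) (hξσ : ξ < σ) :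
    (∫ x in Set.Iic ((utld - μ) / ξ),
        Phi ((utld - μ - ξ * x) / Real.sqrt (σ^2 - ξ^2)) * phiPdf x)
      = (1/2) * Phi ((utld - μ) / σ) + (1/2) * Phi ((utld - μ) / ξ)
        - owenT ((utld - μ) / σ) (Real.sqrt (σ^2 - ξ^2) / ξ) := by
  have hσ : 0 < σ := hξ.trans hξσ
  set c := utld - μ with hc
  set p := Real.sqrt (σ^2 - ξ^2) with hp
  have hppos : 0 < p := Real.sqrt_pos.2 (by nlinarith)
  set k := c / ξ with hk
  -- the product function and its derivative
  set w : ℝ → ℝ := fun x => Phi ((c - ξ*x)/p) * Phi x with hw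
  have hinner : ∀ x : ℝ, HasDerivAt (fun x : ℝ => (c - ξ*x)/p) (-ξ/p) x := by
    intro x
    have h1 : HasDerivAt (fun x : ℝ => c - ξ*x) (-ξ) x := by
      simpa using ((hasDerivAt_id x).const_mul ξ).const_sub c
    simpa [neg_div] using h1.div_const p
  have hΦ1 : ∀ x : ℝ, HasDerivAt (fun x : ℝ => Phi ((c - ξ*x)/p))
      (phiPdf ((c - ξ*x)/p) * (-ξ/p)) x := fun x =>
    (hasDerivAt_Phi ((c - ξ*x)/p)).comp (h := fun x : ℝ => (c - ξ*x)/p) x (hinner x)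
  have hwder : ∀ x : ℝ, HasDerivAt w
      (phiPdf ((c - ξ*x)/p) * (-ξ/p) * Phi x + Phi ((c - ξ*x)/p) * phiPdf x) x := fun x =>
    (hΦ1 x).mul (hasDerivAt_Phi x)
  -- integrability
  have haff : Integrable (fun x : ℝ => phiPdf ((c - ξ*x)/p)) := by
    have h1 : Integrable (fun u : ℝ => phiPdf (u + c/p)) := integrable_phiPdf.comp_add_right (c/p)
    have hR : (-ξ/p : ℝ) ≠ 0 := by
      have : (0:ℝ) < ξ/p := by positivity
      simpa [neg_div] using neg_ne_zero.2 this.ne'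
    have h2 : Integrable (fun x : ℝ => phiPdf ((-ξ/p) * x + c/p)) := h1.comp_mul_left' hR
    have he : (fun x : ℝ => phiPdf ((c - ξ*x)/p)) = fun x : ℝ => phiPdf ((-ξ/p) * x + c/p) := by
      funext x
      congr 1
      field_simp
      ring
    rw [he]; exact h2
  have hcΦ1 : Continuous fun x : ℝ => Phi ((c - ξ*x)/p) := by fun_prop
  have hcφ1 : Continuous fun x : ℝ => phiPdf ((c - ξ*x)/p) := by fun_prop
  have I1 : IntegrableOn (fun x : ℝ => Phi ((c - ξ*x)/p) * phiPdf x) (Iic k) := by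
    apply Integrable.mono (integrable_phiPdf.restrict)
      ((hcΦ1.mul continuous_phiPdf).aestronglyMeasurable.restrict)
    apply Eventually.of_forall
    intro x
    simp only [Pi.mul_apply]
    rw [Real.norm_eq_abs, Real.norm_eq_abs, abs_of_nonneg (phiPdf_nonneg x),
      abs_of_nonneg (mul_nonneg (Phi_nonneg _) (phiPdf_nonneg x))]
    nlinarith [Phi_nonneg ((c - ξ*x)/p), Phi_le_one ((c - ξ*x)/p), phiPdf_nonneg x]
  have I2 : IntegrableOn (fun x : ℝ => phiPdf ((c - ξ*x)/p) * (-ξ/p) * Phi x) (Iic k) := by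
    apply Integrable.mono ((haff.mul_const (ξ/p)).restrict)
      (((hcφ1.mul continuous_const).mul continuous_Phi).aestronglyMeasurable.restrict)
    apply Eventually.of_forall
    intro x
    have hb1 : |(-ξ/p : ℝ)| = ξ/p := by
      rw [abs_div, abs_neg, abs_of_nonneg hξ.le, abs_of_nonneg hppos.le]
    have hb2 : |(ξ/p : ℝ)| = ξ/p := by
      rw [abs_div, abs_of_nonneg hξ.le, abs_of_nonneg hppos.le]
    simp only [Pi.mul_apply]
    rw [Real.norm_eq_abs, Real.norm_eq_abs, abs_mul, abs_mul, abs_mul, hb1, hb2,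
      abs_of_nonneg (phiPdf_nonneg _), abs_of_nonneg (Phi_nonneg x)]
    have hdp : (0:ℝ) < ξ/p := div_pos hξ hppos
    nlinarith [phiPdf_nonneg ((c - ξ*x)/p), Phi_nonneg x, Phi_le_one x,
      mul_nonneg (phiPdf_nonneg ((c - ξ*x)/p)) hdp.le]
  -- limit of w at -infinity
  have hwlim : Tendsto w atBot (𝓝 0) := by
    have hbd : ∀ x : ℝ, ‖w x‖ ≤ Phi x := by
      intro x
      rw [hw]
      dsimp only
      rw [Real.norm_eq_abs, abs_of_nonneg (mul_nonneg (Phi_nonneg _) (Phi_nonneg x))]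
      nlinarith [Phi_nonneg ((c - ξ*x)/p), Phi_le_one ((c - ξ*x)/p), Phi_nonneg x]
    exact squeeze_zero_norm hbd Phi_tendsto_atBot
  -- FTC on (-infty, k]
  have hIBP : ∫ x in Iic k,
      (phiPdf ((c - ξ*x)/p) * (-ξ/p) * Phi x + Phi ((c - ξ*x)/p) * phiPdf x) = w k - 0 :=
    integral_Iic_of_hasDerivAt_of_tendsto' (fun x _ => hwder x) (I2.add I1) hwlim
  have hwk : w k = (1/2) * Phi k := by
    rw [hw]
    dsimp only
    have : (c - ξ*k)/p = 0 := by
      rw [hk, mul_div_cancel₀ c hξ.ne', sub_self, zero_div]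
    rw [this, Phi_zero]
  -- split the integral
  have hsplitint : ∫ x in Iic k,
      (phiPdf ((c - ξ*x)/p) * (-ξ/p) * Phi x + Phi ((c - ξ*x)/p) * phiPdf x)
      = (∫ x in Iic k, phiPdf ((c - ξ*x)/p) * (-ξ/p) * Phi x)
        + ∫ x in Iic k, Phi ((c - ξ*x)/p) * phiPdf x :=
    integral_add I2 I1
  -- substitution step
  have hsub : ∫ x in Iic k, phiPdf ((c - ξ*x)/p) * Phi x
      = (p/ξ) * ∫ s in Ioi (0:ℝ), phiPdf s * Phi ((c - p*s)/ξ) := by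
    set g₀ : ℝ → ℝ := fun t => phiPdf (ξ*t/p) * Phi (k - t) with hg₀
    have stepA : ∫ x in Iic k, phiPdf ((c - ξ*x)/p) * Phi x = ∫ t in Ioi (0:ℝ), g₀ t := by
      have e1 : ∫ x in Iic k, phiPdf ((c - ξ*x)/p) * Phi x
          = ∫ u in Iic (0:ℝ), phiPdf ((c - ξ*(u + k))/p) * Phi (u + k) :=
        (integral_Iic_shift (fun x => phiPdf ((c - ξ*x)/p) * Phi x) k).symm
      have e2 : ∀ u : ℝ, phiPdf ((c - ξ*(u + k))/p) * Phi (u + k) = g₀ (-u) := by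
        intro u
        rw [hg₀]
        dsimp only
        have hnum : c - ξ*(u + k) = ξ*(-u) := by
          rw [hk]
          field_simp
          ring
        have harg2 : u + k = k - -u := by ring
        rw [hnum, harg2]
      have e3 : ∫ u in Iic (0:ℝ), g₀ (-u) = ∫ t in Ioi (-(0:ℝ)), g₀ t :=
        integral_comp_neg_Iic 0 g₀
      rw [e1, show (fun u : ℝ => phiPdf ((c - ξ*(u + k))/p) * Phi (u + k)) = fun u => g₀ (-u) from
        funext e2, e3, neg_zero]
    have stepB : ∫ t in Ioi (0:ℝ), g₀ t
        = (p/ξ) * ∫ s in Ioi (0:ℝ), phiPdf s * Phi ((c - p*s)/ξ) := by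
      have hscale := integral_comp_mul_left_Ioi g₀ 0 (b := p/ξ) (by positivity)
      rw [mul_zero, smul_eq_mul] at hscale
      have e4 : ∀ s : ℝ, g₀ ((p/ξ) * s) = phiPdf s * Phi ((c - p*s)/ξ) := by
        intro s
        rw [hg₀]
        dsimp only
        have harg1 : ξ*((p/ξ)*s)/p = s := by field_simp
        have harg2 : k - (p/ξ)*s = (c - p*s)/ξ := by
          rw [hk]; field_simp
          try ring
        rw [harg1, harg2]
      rw [show (fun s : ℝ => g₀ ((p/ξ)*s)) = fun s => phiPdf s * Phi ((c - p*s)/ξ) from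
        funext e4] at hscale
      rw [hscale]
      field_simp
    rw [stepA, stepB]
  -- pull the constant out of the first integral
  have hconstmul : ∫ x in Iic k, phiPdf ((c - ξ*x)/p) * (-ξ/p) * Phi x
      = (-ξ/p) * ∫ x in Iic k, phiPdf ((c - ξ*x)/p) * Phi x := by
    rw [← integral_const_mul]
    apply setIntegral_congr_fun measurableSet_Iic
    intro x _
    ring
  -- combine everything
  have hB := B_eq σ ξ hξ hξσ c
  rw [← hp] at hB
  have hLHS : ∫ x in Iic k, Phi ((c - ξ*x)/p) * phiPdf x
      = (1/2) * Phi k + ∫ s in Ioi (0:ℝ), phiPdf s * Phi ((c - p*s)/ξ) := by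
    have h5 : (∫ x in Iic k, phiPdf ((c - ξ*x)/p) * (-ξ/p) * Phi x)
        + ∫ x in Iic k, Phi ((c - ξ*x)/p) * phiPdf x = (1/2) * Phi k := by
      rw [← hsplitint, hIBP, hwk]; ring
    have h6 : (-ξ/p) * ((p/ξ) * ∫ s in Ioi (0:ℝ), phiPdf s * Phi ((c - p*s)/ξ))
        = -(∫ s in Ioi (0:ℝ), phiPdf s * Phi ((c - p*s)/ξ)) := by
      field_simp
    rw [hconstmul, hsub, h6] at h5
    linarith
  rw [hLHS, hB]
  ring
end
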